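/- There are no integers n, x, y with n ≥ 3 and max{|x|,|y|} ≥ 2 such that Φ_n(x,y) = 1 or Φ_n(x,y) = 2. -/

import Mathlib

/-!
We show `|Φₙ(x, y)| ≥ 3`. Over `ℂ`, `Φₙ(x, y) = ∏ (x - μ y)` over the primitive `n`-th roots
of unity `μ`. The identities `Φ₂ₘ(x, y) = ± Φₘ(-x, y)` for odd `m` and `Φₘₚ(x, y) = Φₘ(xᵖ, yᵖ)`
for `p ∣ m` reduce this to odd `n`, or to `Φ₄(x, y) = x² + y²`.

For odd `n` and `|μ| = 1` one has `|x - μ y| ≥ max(|x|, |y|) |Im μ| = max(|x|, |y|) |1 - μ²| / 2`,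
and squaring permutes the primitive `n`-th roots, so `2^φ(n) |Φₙ(x, y)| ≥ max(|x|, |y|)^φ(n) φₙ(1)`
with `φₙ(1) ≥ 1`. As `φ(n) ≥ 2`, this forces `|Φₙ(x, y)| ≥ 3` once `max(|x|, |y|) ≥ 3`.
When `max(|x|, |y|) = 2`, either `x, y` are both even and `4 ∣ Φₙ(x, y) ≠ 0`, or, up to the
symmetry `|Φₙ(x, y)| = |Φₙ(y, x)|`, `(x, y) = (±2, ±1)` and `Φₙ(x, y) = φₙ(±2)`, an odd integer
of absolute value `> 1`.
-/

/-- The cyclotomic binary form `Φₙ(X,Y) = Y^{φ(n)} φₙ(X/Y)`, evaluated at integers. -/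
noncomputable def cycBinaryForm (n : ℕ) (x y : ℤ) : ℤ :=
  ∑ i ∈ Finset.range (n.totient + 1),
    (Polynomial.cyclotomic n ℤ).coeff i * x ^ i * y ^ (n.totient - i)

open Polynomial Finset

lemma cycBinaryForm_one_right (n : ℕ) (x : ℤ) :
    cycBinaryForm n x 1 = (cyclotomic n ℤ).eval x := by
  simp [cycBinaryForm, eval_eq_sum_range, natDegree_cyclotomic]

lemma cycBinaryForm_two (x y : ℤ) : cycBinaryForm 2 x y = x + y := by
  simp [cycBinaryForm, sum_range_succ, coeff_X, coeff_one, add_comm]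

lemma cycBinaryForm_mul_mul (n : ℕ) (c x y : ℤ) :
    cycBinaryForm n (c * x) (c * y) = c ^ n.totient * cycBinaryForm n x y := by
  rw [cycBinaryForm, cycBinaryForm, mul_sum]
  refine sum_congr rfl fun i hi ↦ ?_
  rw [← pow_mul_pow_sub c (Nat.lt_succ_iff.1 (mem_range.1 hi))]
  ring

lemma cycBinaryForm_eq_eval_homogenize (n : ℕ) (x y : ℤ) :
    cycBinaryForm n x y = MvPolynomial.eval ![x, y] ((cyclotomic n ℤ).homogenize n.totient) := by
  simp only [cycBinaryForm, homogenize, Nat.sum_antidiagonal_eq_sum_range_succ_mk,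
    MvPolynomial.eval_sum, MvPolynomial.eval_monomial]
  refine sum_congr rfl fun k _ ↦ ?_
  rw [Finsupp.prod_fintype _ _ (by simp)]
  simp [mul_assoc]

lemma homogenize_expand {R : Type*} [CommRing R] (p : ℕ) {f : R[X]} {d : ℕ}
    (hf : f.natDegree ≤ d) :
    (expand R p f).homogenize (p * d) = MvPolynomial.expand p (f.homogenize d) := by
  apply homogenize_eq_of_isHomogeneous
  · rw [MvPolynomial.coe_expand]
    exact (isHomogeneous_homogenize f).aeval _ fun i ↦ MvPolynomial.isHomogeneous_X_pow i p
  · rw [MvPolynomial.aeval_expand, aeval_homogenize_of_eq_one hf] <;>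
      simp [expand_eq_comp_X_pow, comp_eq_aeval]

lemma cycBinaryForm_mul_of_dvd {m p : ℕ} (hp : p.Prime) (hpm : p ∣ m) (x y : ℤ) :
    cycBinaryForm (m * p) x y = cycBinaryForm m (x ^ p) (y ^ p) := by
  rw [cycBinaryForm_eq_eval_homogenize, cycBinaryForm_eq_eval_homogenize, mul_comm m p,
    Nat.totient_mul_of_prime_of_dvd hp hpm, mul_comm p m,
    ← cyclotomic_expand_eq_cyclotomic hp hpm, homogenize_expand p (natDegree_cyclotomic m ℤ).le,
    MvPolynomial.eval_expand]
  congr 2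
  funext i
  fin_cases i <;> rfl

lemma cycBinaryForm_eq_prod (n : ℕ) (hn : n ≠ 0) (x y : ℤ) :
    (cycBinaryForm n x y : ℂ) = ∏ μ ∈ primitiveRoots n ℂ, ((x : ℂ) - μ * y) := by
  have hdeg : n.totient = ∑ _μ ∈ primitiveRoots n ℂ, 1 := by simp [Complex.card_primitiveRoots]
  have hprod := cyclotomic_eq_prod_X_sub_primitiveRoots (Complex.isPrimitiveRoot_exp n hn)
  rw [cycBinaryForm_eq_eval_homogenize, ← eq_intCast (Int.castRingHom ℂ), MvPolynomial.map_eval,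
    ← homogenize_map, map_cyclotomic, hdeg, hprod,
    homogenize_finsetProd (p := fun μ ↦ X - C μ) (n := fun _ ↦ 1) (fun μ _ ↦ by simp)]
  simp

lemma IsPrimitiveRoot.neg_of_odd {R : Type*} [CommRing R] [CharZero R] {ζ : R} {m : ℕ}
    (hζ : IsPrimitiveRoot ζ m) (hm : Odd m) : IsPrimitiveRoot (-ζ) (2 * m) := by
  convert IsPrimitiveRoot.orderOf (-ζ)
  rw [neg_eq_neg_one_mul, (Commute.all _ _).orderOf_mul_eq_mul_orderOf_of_coprime]
  · simp [hζ.eq_orderOf]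
  · simp [← hζ.eq_orderOf, hm]

lemma primitiveRoots_two_mul_eq_map_neg {m : ℕ} (hm : Odd m) :
    primitiveRoots (2 * m) ℂ = (primitiveRoots m ℂ).map (Equiv.neg ℂ).toEmbedding := by
  refine (eq_of_subset_of_card_le (fun μ hμ ↦ ?_) ?_).symm
  · obtain ⟨ν, hν, rfl⟩ := mem_map.1 hμ
    exact (mem_primitiveRoots (mul_pos two_pos hm.pos)).2
      (((mem_primitiveRoots hm.pos).1 hν).neg_of_odd hm)
  · simp [Complex.card_primitiveRoots, Nat.totient_mul (Nat.coprime_two_left.2 hm)]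

lemma cycBinaryForm_two_mul {m : ℕ} (hm : Odd m) (x y : ℤ) :
    cycBinaryForm (2 * m) x y = (-1) ^ m.totient * cycBinaryForm m (-x) y := by
  apply Int.cast_injective (α := ℂ)
  rw [Int.cast_mul, cycBinaryForm_eq_prod _ (mul_pos two_pos hm.pos).ne',
    cycBinaryForm_eq_prod _ hm.pos.ne', primitiveRoots_two_mul_eq_map_neg hm, prod_map,
    ← Complex.card_primitiveRoots, Int.cast_pow, Int.cast_neg, Int.cast_one, ← prod_const,
    ← prod_mul_distrib]
  refine prod_congr rfl fun ν _ ↦ ?_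
  simp only [Equiv.coe_toEmbedding, Equiv.neg_apply, Int.cast_neg]
  ring

lemma Complex.normSq_ofReal_sub_mul_ofReal {μ : ℂ} (hμ : ‖μ‖ = 1) (a b : ℝ) :
    normSq (a - μ * b) = a ^ 2 - 2 * a * b * μ.re + b ^ 2 := by
  have h : μ.re * μ.re + μ.im * μ.im = 1 := by
    rw [← normSq_apply, ← Complex.sq_norm, hμ, one_pow]
  simp only [normSq_apply, sub_re, sub_im, mul_re, mul_im, ofReal_re, ofReal_im]
  linear_combination b ^ 2 * h

lemma Complex.norm_ofReal_sub_mul_ofReal_comm {μ : ℂ} (hμ : ‖μ‖ = 1) (a b : ℝ) :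
    ‖(a : ℂ) - μ * b‖ = ‖(b : ℂ) - μ * a‖ := by
  rw [Complex.norm_def, Complex.norm_def, normSq_ofReal_sub_mul_ofReal hμ,
    normSq_ofReal_sub_mul_ofReal hμ]
  ring_nf

lemma Complex.max_abs_mul_norm_one_sub_sq_le {μ : ℂ} (hμ : ‖μ‖ = 1) (a b : ℝ) :
    max |a| |b| * ‖1 - μ ^ 2‖ ≤ 2 * ‖(a : ℂ) - μ * b‖ := by
  have h : μ.re * μ.re + μ.im * μ.im = 1 := by
    rw [← normSq_apply, ← Complex.sq_norm, hμ, one_pow]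
  have hμ2 : normSq (1 - μ ^ 2) = 4 * μ.im ^ 2 := by
    simp only [normSq_apply, pow_two, sub_re, sub_im, mul_re, mul_im, one_re, one_im]
    linear_combination (μ.re * μ.re + μ.im * μ.im - 1) * h
  rw [← pow_le_pow_iff_left₀ (by positivity) (by positivity) two_ne_zero, mul_pow, mul_pow,
    Complex.sq_norm, Complex.sq_norm, hμ2, normSq_ofReal_sub_mul_ofReal hμ]
  rcases le_total |a| |b| with hab | hab
  · rw [max_eq_right hab, sq_abs]
    nlinarith [sq_nonneg (a - b * μ.re)]
  · rw [max_eq_left hab, sq_abs]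
    nlinarith [sq_nonneg (b - a * μ.re)]

lemma abs_cycBinaryForm_comm {n : ℕ} (hn : n ≠ 0) (x y : ℤ) :
    |cycBinaryForm n x y| = |cycBinaryForm n y x| := by
  apply Int.cast_injective (α := ℝ)
  simp only [Int.cast_abs, ← Complex.norm_intCast, cycBinaryForm_eq_prod n hn, norm_prod]
  refine prod_congr rfl fun μ hμ ↦ ?_
  have hμ1 : ‖μ‖ = 1 := ((mem_primitiveRoots (Nat.pos_of_ne_zero hn)).1 hμ).norm'_eq_one hn
  exact_mod_cast Complex.norm_ofReal_sub_mul_ofReal_comm hμ1 x y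

lemma prod_primitiveRoots_comp_sq {R M : Type*} [CommRing R] [IsDomain R] [CommMonoid M] {n : ℕ}
    (hn : Odd n) (f : R → M) :
    ∏ μ ∈ primitiveRoots n R, f (μ ^ 2) = ∏ μ ∈ primitiveRoots n R, f μ := by
  classical
  have hn0 : 0 < n := hn.pos
  obtain ⟨k, rfl⟩ := hn
  have hsqrt : ∀ μ ∈ primitiveRoots (2 * k + 1) R, (μ ^ 2) ^ (k + 1) = μ := fun μ hμ ↦ by
    rw [← pow_mul, mul_add_one, pow_succ, ((mem_primitiveRoots hn0).1 hμ).pow_eq_one, one_mul]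
  have hinj : Set.InjOn (· ^ 2) (primitiveRoots (2 * k + 1) R : Set R) := fun μ hμ ν hν h ↦ by
    rw [← hsqrt μ hμ, ← hsqrt ν hν]
    exact congrArg (· ^ (k + 1)) h
  rw [← prod_image hinj]
  congr 1
  refine eq_of_subset_of_card_le (image_subset_iff.2 fun μ hμ ↦ ?_) (card_image_of_injOn hinj).ge
  exact (mem_primitiveRoots hn0).2 (((mem_primitiveRoots hn0).1 hμ).pow_of_coprime 2
    (Nat.coprime_two_left.2 (odd_two_mul_add_one k)))

theorem max_abs_pow_mul_abs_eval_one_le {n : ℕ} (hn : Odd n) (x y : ℤ) :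
    max |x| |y| ^ n.totient * |(cyclotomic n ℤ).eval 1| ≤
      2 ^ n.totient * |cycBinaryForm n x y| := by
  have hn0 : n ≠ 0 := hn.pos.ne'
  have hnorm : ∀ μ ∈ primitiveRoots n ℂ, ‖μ‖ = 1 := fun μ hμ ↦
    ((mem_primitiveRoots hn.pos).1 hμ).norm'_eq_one hn0
  have heval : (((cyclotomic n ℤ).eval 1 : ℤ) : ℂ) = ∏ μ ∈ primitiveRoots n ℂ, (1 - μ ^ 2) := by
    rw [← cycBinaryForm_one_right, cycBinaryForm_eq_prod n hn0,
      prod_primitiveRoots_comp_sq hn (1 - ·)]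
    simp
  rw [← @Int.cast_le ℝ]
  push_cast
  rw [← Complex.norm_intCast ((cyclotomic n ℤ).eval 1), heval,
    ← Complex.norm_intCast (cycBinaryForm n x y), cycBinaryForm_eq_prod n hn0,
    norm_prod, norm_prod, ← Complex.card_primitiveRoots, ← prod_const, ← prod_const,
    ← prod_mul_distrib, ← prod_mul_distrib]
  refine prod_le_prod (fun _ _ ↦ by positivity) fun μ hμ ↦ ?_
  exact_mod_cast Complex.max_abs_mul_norm_one_sub_sq_le (hnorm μ hμ) x y

lemma Nat.two_le_totient {n : ℕ} (hn : 3 ≤ n) : 2 ≤ n.totient := by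
  obtain ⟨k, hk⟩ := Nat.totient_even (by omega : 2 < n)
  have := Nat.totient_pos.2 (by omega : 0 < n)
  omega

lemma three_le_abs_eval_two_cyclotomic {n : ℕ} (hn : 2 ≤ n) :
    3 ≤ |(cyclotomic n ℤ).eval 2| := by
  have hpar : 2 ∣ (cyclotomic n ℤ).eval 2 - 1 := by
    simpa [← coeff_zero_eq_eval_zero, cyclotomic_coeff_zero ℤ hn] using
      sub_dvd_eval_sub 2 0 (cyclotomic n ℤ)
  have hgt := sub_one_pow_totient_lt_natAbs_cyclotomic_eval (q := 2) hn (by norm_num)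
  simp only [Nat.add_one_sub_one, one_pow, Nat.cast_ofNat] at hgt
  rw [Int.abs_eq_natAbs]
  omega

lemma three_le_abs_eval_cyclotomic_of_abs_eq_two {n : ℕ} (hodd : Odd n) (hn : 2 ≤ n) {a : ℤ}
    (ha : |a| = 2) : 3 ≤ |(cyclotomic n ℤ).eval a| := by
  rcases abs_eq zero_le_two |>.1 ha with rfl | rfl
  · exact three_le_abs_eval_two_cyclotomic hn
  · have h := cycBinaryForm_two_mul hodd 2 1
    rw [cycBinaryForm_one_right, cycBinaryForm_one_right] at h
    simpa [h, abs_mul] using three_le_abs_eval_two_cyclotomic (n := 2 * n) (by omega)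

lemma three_le_abs_cycBinaryForm_of_max_eq_two {n : ℕ} (hodd : Odd n) (hn : 3 ≤ n) {x y : ℤ}
    (hM : max |x| |y| = 2) (hB : cycBinaryForm n x y ≠ 0) : 3 ≤ |cycBinaryForm n x y| := by
  have hcomm := abs_cycBinaryForm_comm (by omega : n ≠ 0) x y
  wlog hx : |x| = 2 generalizing x y
  · rw [hcomm]
    refine this (by rwa [max_comm]) ?_ (abs_cycBinaryForm_comm (by omega) y x) (by omega)
    rwa [← abs_ne_zero, ← hcomm, abs_ne_zero]
  have hy : |y| ≤ 2 := hM ▸ le_max_right _ _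
  rcases Int.even_or_odd y with hy2 | hy2
  · obtain ⟨a, rfl⟩ : 2 ∣ x := by rcases abs_eq zero_le_two |>.1 hx with h | h <;> simp [h]
    obtain ⟨b, rfl⟩ := hy2.two_dvd
    have h4 : 4 ∣ cycBinaryForm n (2 * a) (2 * b) := by
      rw [cycBinaryForm_mul_mul]
      exact (pow_dvd_pow 2 (Nat.two_le_totient hn)).mul_right _
    have := Int.le_of_dvd (abs_pos.2 hB) ((dvd_abs _ _).2 h4)
    omega
  · obtain rfl | rfl : y = 1 ∨ y = -1 := by
      obtain ⟨k, rfl⟩ := hy2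
      rw [abs_le] at hy
      omega
    · rw [cycBinaryForm_one_right]
      exact three_le_abs_eval_cyclotomic_of_abs_eq_two hodd (by omega) hx
    · have h := cycBinaryForm_mul_mul n (-1) (-x) 1
      rw [(Nat.totient_even (by omega)).neg_one_pow, one_mul, neg_one_mul, neg_neg,
        mul_one] at h
      rw [h, cycBinaryForm_one_right]
      exact three_le_abs_eval_cyclotomic_of_abs_eq_two hodd (by omega) (by rwa [abs_neg])

theorem three_le_abs_cycBinaryForm_of_odd {n : ℕ} (hodd : Odd n) (hn : 3 ≤ n) {x y : ℤ}
    (hM : 2 ≤ max |x| |y|) : 3 ≤ |cycBinaryForm n x y| := by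
  have hbound := max_abs_pow_mul_abs_eval_one_le hodd x y
  have heval : 1 ≤ |(cyclotomic n ℤ).eval 1| :=
    Int.one_le_abs (cyclotomic_pos (by omega) (1 : ℤ)).ne'
  have hB : cycBinaryForm n x y ≠ 0 := by
    rintro hB
    rw [hB, abs_zero, mul_zero] at hbound
    have : 0 < max |x| |y| ^ n.totient * |(cyclotomic n ℤ).eval 1| := by positivity
    omega
  rcases hM.eq_or_lt with hM | hM
  · exact three_le_abs_cycBinaryForm_of_max_eq_two hodd hn hM.symm hB
  obtain ⟨d, hd⟩ := Nat.exists_eq_add_of_le (Nat.two_le_totient hn)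
  have h3 : (3 : ℤ) ^ n.totient ≤ 2 ^ n.totient * |cycBinaryForm n x y| :=
    calc (3 : ℤ) ^ n.totient ≤ max |x| |y| ^ n.totient * 1 := by
          rw [mul_one]; exact pow_le_pow_left₀ (by norm_num) hM _
      _ ≤ max |x| |y| ^ n.totient * |(cyclotomic n ℤ).eval 1| := by gcongr
      _ ≤ _ := hbound
  rw [hd, pow_add, pow_add] at h3
  have : (2 : ℤ) ^ d ≤ 3 ^ d := pow_le_pow_left₀ (by norm_num) (by norm_num) d
  nlinarith [pow_pos (two_pos (α := ℤ)) d]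

theorem three_le_abs_cycBinaryForm {n : ℕ} (hn : 3 ≤ n) {x y : ℤ} (hM : 2 ≤ max |x| |y|) :
    3 ≤ |cycBinaryForm n x y| := by
  induction n using Nat.strong_induction_on generalizing x y with | _ n ih
  rcases n.even_or_odd with ⟨m, rfl⟩ | hodd
  · rcases m.even_or_odd with hm | hm
    · have hsq : 4 ≤ max |x ^ 2| |y ^ 2| := by
        rw [abs_pow, abs_pow]
        rcases le_max_iff.1 hM with h | h
        · exact le_max_of_le_left (by nlinarith)
        · exact le_max_of_le_right (by nlinarith)
      rw [← mul_two, cycBinaryForm_mul_of_dvd Nat.prime_two hm.two_dvd]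
      obtain rfl | hm4 : m = 2 ∨ 4 ≤ m := by obtain ⟨k, rfl⟩ := hm; omega
      · rw [cycBinaryForm_two, abs_of_nonneg (by positivity)]
        simp only [abs_pow, sq_abs] at hsq
        rcases le_max_iff.1 hsq with h | h <;> nlinarith [sq_nonneg x, sq_nonneg y]
      · exact ih m (by omega) (by omega) (by omega)
    · rw [← two_mul, cycBinaryForm_two_mul hm, abs_mul, abs_pow, abs_neg, abs_one, one_pow,
        one_mul]
      exact ih m (by omega) (by obtain ⟨k, rfl⟩ := hm; omega) (by rwa [abs_neg])
  · exact three_le_abs_cycBinaryForm_of_odd hodd hn hM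

theorem stmt1 :
    ¬ ∃ (n : ℕ) (x y : ℤ), 3 ≤ n ∧ 2 ≤ max |x| |y| ∧
      (cycBinaryForm n x y = 1 ∨ cycBinaryForm n x y = 2) := by
  rintro ⟨n, x, y, hn, hM, h⟩
  have := three_le_abs_cycBinaryForm hn hM
  rcases h with h | h <;> rw [h] at this <;> norm_num at this
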